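/- Let W be a standard one-dimensional Brownian motion on a probability space (Ω, 𝓕, ℙ). For h ∈ (0,∞) define a_h := ∫_0^∞ 1_{[0,1)}(⌊u⌋_h)·exp( −1/(1 − ⌊u⌋_h²) ) du − ∫_0^1 exp( −1/(1 − u²) ) du, and for t ∈ [1,∞) define E[X₁(t)] := ∫_1^t exp( −1/(s² − 1) ) ds (the exact mean) and E[Y^h₁(t)] := ∫_1^t 1_{(1,∞)}(⌊s⌋_h)·exp( −1/(⌊s⌋_h² − 1) )·E[ cos( a_h · exp( W(⌊s⌋_h)³ ) ) ] ds (the mean of the first component of the Euler–Maruyama approximation with step size h of the SDE (5.2)). Then E[X₁(t)] − E[Y^h₁(t)] ≥ exp( −14·|ln h|^{2/3} ) for all h ∈ (0, 1/22] and all t ∈ [2,∞); in particular, for every α ∈ (0,∞) and every t ∈ [2,∞), lim_{h↘0} h^{−α}·( E[X₁(t)] − E[Y^h₁(t)] ) = ∞, so the Euler–Maruyama approximations converge in the weak sense slower than any polynomial rate. -/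

import Mathlib

open MeasureTheory ProbabilityTheory
open scoped ENNReal

/-- A standard one-dimensional Brownian motion on a probability space `(Ω, 𝓕, P)`:
a stochastic process `W : [0,∞) × Ω → ℝ` (modelled as `W : ℝ → Ω → ℝ`, relevant only for
nonnegative times) with `W 0 = 0`, P-almost surely continuous sample paths,
independent increments, and `W t - W s` normally distributed with mean `0` and
variance `t - s` for all `0 ≤ s ≤ t`. -/
structure IsStandardBrownianMotion {Ω : Type*} [MeasurableSpace Ω] (P : Measure Ω)
    (W : ℝ → Ω → ℝ) : Prop where
  isProbabilityMeasure : IsProbabilityMeasure P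
  measurable : ∀ t : ℝ, Measurable (W t)
  start : ∀ ω, W 0 ω = 0
  ae_continuous : ∀ᵐ ω ∂P, ContinuousOn (fun t => W t ω) (Set.Ici 0)
  indep_increments : ∀ (n : ℕ) (t : Fin (n + 1) → ℝ), (∀ i, 0 ≤ t i) → Monotone t →
    iIndepFun
      (fun (i : Fin n) (ω : Ω) => W (t i.succ) ω - W (t i.castSucc) ω) P
  gauss_increments : ∀ s t : ℝ, 0 ≤ s → s ≤ t →
    P.map (fun ω => W t ω - W s ω) = gaussianReal 0 (Real.toNNReal (t - s))

open Filter

/-- For `h ∈ (0,∞)` and `t ∈ [0,∞)`, `⌊t⌋_h = max { s ∈ {0, h, 2h, …} : s ≤ t } = h·⌊t/h⌋`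
is the largest grid point of the grid `{0, h, 2h, …}` not exceeding `t`. -/
noncomputable def gridFloor (h t : ℝ) : ℝ := h * ⌊t / h⌋₊

/-- `a_h = ∫_0^∞ 1_{[0,1)}(⌊u⌋_h)·exp(−1/(1−⌊u⌋_h²)) du − ∫_0^1 exp(−1/(1−u²)) du`. -/
noncomputable def eulerDefect (h : ℝ) : ℝ :=
  (∫ u in Set.Ioi (0:ℝ),
      Set.indicator (Set.Ico (0:ℝ) 1) (fun y => Real.exp (-1 / (1 - y ^ 2)))
        (gridFloor h u)) -
    ∫ u in (0:ℝ)..1, Real.exp (-1 / (1 - u ^ 2))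

/-- The mean `E[X₁(t)] = ∫_1^t exp(−1/(s²−1)) ds` of the first component of the exact
solution of the SDE (5.2), started at `0`. -/
noncomputable def meanExactX1 (t : ℝ) : ℝ :=
  ∫ s in (1:ℝ)..t, Real.exp (-1 / (s ^ 2 - 1))

/-- The mean
`E[Y₁^h(t)] = ∫_1^t 1_{(1,∞)}(⌊s⌋_h)·exp(−1/(⌊s⌋_h²−1))·E[cos(a_h·exp(W(⌊s⌋_h)³))] ds`
of the first component of the Euler–Maruyama approximation with step size `h` of the
SDE (5.2), started at `0`. -/
noncomputable def meanEulerY1 {Ω : Type*} [MeasurableSpace Ω] (P : Measure Ω)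
    (W : ℝ → Ω → ℝ) (h t : ℝ) : ℝ :=
  ∫ s in (1:ℝ)..t,
    Set.indicator (Set.Ioi (1:ℝ)) (fun y => Real.exp (-1 / (y ^ 2 - 1)))
        (gridFloor h s) *
      ∫ ω, Real.cos (eulerDefect h * Real.exp ((W (gridFloor h s) ω) ^ 3)) ∂P

/-!
The Euler scheme evaluates the drift of `X₃` only at grid points, so the phase that the exact
solution sees as `0` becomes `a_h·exp(W(τ)³)` with `h²/90 ≤ a_h ≤ 2`. For `τ ∈ [1, 2]` the
Gaussian `W(τ)` lands with probability at least of order `exp(-β²)`, `β³ = log(7π/(2a_h))`, in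
the window where `a_h·exp(W(τ)³) ∈ [5π/2, 7π/2]` and the cosine is nonpositive, so
`E[cos(a_h·exp(W(τ)³))] ≤ 1 - exp(-β²)/42`, whereas the exact solution has `cos 0 = 1`.
Integrating over `s ∈ [3/2, 2]` and using `β² ≤ 4|log h|^{2/3}` gives the lower bound, which
decays slower than every power of `h`.
-/
open Real Set
open scoped NNReal Topology Interval

section GridFloor

variable {h : ℝ}

lemma gridFloor_nonneg (hh : 0 ≤ h) (t : ℝ) : 0 ≤ gridFloor h t := by
  unfold gridFloor; positivity

lemma gridFloor_le (hh : 0 < h) {t : ℝ} (ht : 0 ≤ t) : gridFloor h t ≤ t :=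
  calc gridFloor h t ≤ h * (t / h) := by
        unfold gridFloor; gcongr; exact Nat.floor_le (div_nonneg ht hh.le)
    _ = t := mul_div_cancel₀ t hh.ne'

lemma lt_gridFloor_add (hh : 0 < h) (t : ℝ) : t < gridFloor h t + h :=
  calc t = h * (t / h) := (mul_div_cancel₀ t hh.ne').symm
    _ < h * (⌊t / h⌋₊ + 1) := by gcongr; exact Nat.lt_floor_add_one _
    _ = gridFloor h t + h := by unfold gridFloor; ring

lemma gridFloor_eq_of_mem_Ico (hh : 0 < h) {t u : ℝ}
    (hu : u ∈ Ico (gridFloor h t) (gridFloor h t + h)) : gridFloor h u = gridFloor h t := by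
  have hu0 : 0 ≤ u := (gridFloor_nonneg hh.le t).trans hu.1
  obtain ⟨hu1, hu2⟩ := hu
  unfold gridFloor at *
  congr 1
  norm_cast
  rw [Nat.floor_eq_iff (by positivity), le_div_iff₀ hh, div_lt_iff₀ hh]
  constructor <;> linarith

lemma measurable_comp_gridFloor {β : Type*} [MeasurableSpace β] (F : ℝ → β) :
    Measurable fun t => F (gridFloor h t) :=
  (measurable_from_nat (f := fun n : ℕ => F (h * n))).comp
    (Nat.measurable_floor.comp (measurable_id.div_const h))

end GridFloor

lemma intervalIntegrable_of_abs_le {f : ℝ → ℝ} (hf : Measurable f) {a b C : ℝ}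
    (hC : ∀ x ∈ Ι a b, |f x| ≤ C) : IntervalIntegrable f volume a b :=
  intervalIntegrable_const.mono_fun' hf.aestronglyMeasurable
    ((ae_restrict_iff' measurableSet_uIoc).2 (ae_of_all _ hC))

lemma inv_nine_le_exp_neg_two : 1 / 9 ≤ exp (-2) := by
  have h2 : exp 2 ≤ 9 := by
    rw [show (2:ℝ) = 1 + 1 by norm_num, exp_add]
    nlinarith [exp_one_lt_three, exp_pos 1]
  rw [exp_neg, one_div]
  exact inv_anti₀ (exp_pos 2) h2

lemma self_le_exp_half (x : ℝ) : x ≤ exp (x / 2) :=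
  calc x ≤ 2 * exp (x / 2 - 1) := by linarith [add_one_le_exp (x / 2 - 1)]
    _ ≤ exp 1 * exp (x / 2 - 1) := by gcongr; exact exp_one_gt_two.le
    _ = exp (x / 2) := by rw [← exp_add]; ring_nf

lemma exists_nonneg_pow_eq {x : ℝ} (hx : 0 ≤ x) {n : ℕ} (hn : n ≠ 0) :
    ∃ y, 0 ≤ y ∧ y ^ n = x :=
  ⟨x ^ (n⁻¹ : ℝ), by positivity, rpow_inv_natCast_pow hx hn⟩

-- The drift of `X₃` and the amplitude of the drift of `X₁` in (5.2), as functions of `X₄(t) = t`.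
noncomputable def innerBump (y : ℝ) : ℝ := exp (-1 / (1 - y ^ 2))

noncomputable def outerBump (y : ℝ) : ℝ := exp (-1 / (y ^ 2 - 1))

lemma innerBump_pos (y : ℝ) : 0 < innerBump y := exp_pos _

lemma outerBump_pos (y : ℝ) : 0 < outerBump y := exp_pos _

lemma measurable_innerBump : Measurable innerBump := by
  unfold innerBump; fun_prop

lemma measurable_outerBump : Measurable outerBump := by
  unfold outerBump; fun_prop

lemma innerBump_le_one {y : ℝ} (hy : y ^ 2 ≤ 1) : innerBump y ≤ 1 :=
  exp_le_one_iff.2 (div_nonpos_of_nonpos_of_nonneg (by norm_num) (by linarith))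

lemma outerBump_le_one {y : ℝ} (hy : 1 ≤ y ^ 2) : outerBump y ≤ 1 :=
  exp_le_one_iff.2 (div_nonpos_of_nonpos_of_nonneg (by norm_num) (by linarith))

lemma exp_neg_one_le_outerBump {y : ℝ} (hy : 2 ≤ y ^ 2) : exp (-1) ≤ outerBump y := by
  refine exp_le_exp.2 ?_
  rw [neg_div, neg_le_neg_iff, div_le_one (by linarith)]
  linarith

lemma innerBump_antitoneOn : AntitoneOn innerBump (Ico 0 1) := by
  intro y hy u hu hyu
  refine exp_le_exp.2 ?_
  rw [neg_div, neg_div, neg_le_neg_iff]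
  exact one_div_le_one_div_of_le (by nlinarith [hu.1, hu.2]) (by nlinarith [hy.1])

lemma outerBump_monotoneOn : MonotoneOn outerBump (Ioi 1) := by
  intro y hy u _ hyu
  refine exp_le_exp.2 ?_
  rw [neg_div, neg_div, neg_le_neg_iff]
  exact one_div_le_one_div_of_le (by nlinarith [mem_Ioi.1 hy]) (by nlinarith [mem_Ioi.1 hy])

lemma sq_sub_sq_div_nine_le_innerBump_sub {y u : ℝ} (hy : 0 ≤ y) (hyu : y ≤ u)
    (hu : u ^ 2 ≤ 1 / 2) : (u ^ 2 - y ^ 2) / 9 ≤ innerBump y - innerBump u := by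
  have hy2 : y ^ 2 ≤ u ^ 2 := pow_le_pow_left₀ hy hyu 2
  have hu1 : 1 - u ^ 2 ≠ 0 := by linarith
  have hy1 : 1 - y ^ 2 ≠ 0 := by linarith
  obtain ⟨A, hA_def⟩ : ∃ A, A = 1 / (1 - u ^ 2) := ⟨_, rfl⟩
  obtain ⟨B, hB_def⟩ : ∃ B, B = 1 / (1 - y ^ 2) := ⟨_, rfl⟩
  have hB : 1 ≤ B := hB_def ▸ one_le_one_div (by linarith) (by nlinarith)
  have hA : A ≤ 2 := by
    rw [hA_def, div_le_iff₀ (by linarith)]; linarith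
  have hBA : B ≤ A := hA_def ▸ hB_def ▸ one_div_le_one_div_of_le (by linarith) (by linarith)
  have hAB : u ^ 2 - y ^ 2 ≤ A - B := by
    have hprod : A - B = A * B * (u ^ 2 - y ^ 2) := by
      rw [hA_def, hB_def]; field_simp; ring
    rw [hprod]
    nlinarith [mul_le_mul (hB.trans hBA) hB zero_le_one (by linarith)]
  have hexpA : 1 / 9 ≤ exp (-A) := inv_nine_le_exp_neg_two.trans (exp_le_exp.2 (by linarith))
  calc (u ^ 2 - y ^ 2) / 9 ≤ exp (-A) * (A - B) := by nlinarith
    _ ≤ exp (-A) * (exp (A - B) - 1) :=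
        mul_le_mul_of_nonneg_left (by linarith [add_one_le_exp (A - B)]) (exp_pos _).le
    _ = exp (-B) - exp (-A) := by rw [mul_sub, ← exp_add, mul_one]; ring_nf
    _ = innerBump y - innerBump u := by rw [innerBump, innerBump, neg_div, neg_div, hA_def, hB_def]

section EulerDefect

variable {h : ℝ}

lemma intervalIntegrable_innerBump : IntervalIntegrable innerBump volume 0 1 :=
  intervalIntegrable_of_abs_le measurable_innerBump fun u hu => by
    rw [uIoc_of_le zero_le_one] at hu
    rw [abs_of_pos (innerBump_pos u)]
    exact innerBump_le_one (by nlinarith [hu.1, hu.2])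

noncomputable def gridInnerBump (h u : ℝ) : ℝ := (Ico 0 1).indicator innerBump (gridFloor h u)

lemma gridInnerBump_nonneg (h u : ℝ) : 0 ≤ gridInnerBump h u :=
  indicator_nonneg (fun _ _ => (exp_pos _).le) _

lemma gridInnerBump_le_one (h u : ℝ) : gridInnerBump h u ≤ 1 :=
  indicator_le' (fun _ hy => innerBump_le_one (by nlinarith [hy.1, hy.2]))
    (fun _ _ => zero_le_one) _

lemma intervalIntegrable_gridInnerBump (h a b : ℝ) :
    IntervalIntegrable (gridInnerBump h) volume a b :=
  intervalIntegrable_of_abs_le (f := gridInnerBump h) (measurable_comp_gridFloor _) fun u _ => by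
    rw [abs_of_nonneg (gridInnerBump_nonneg h u)]; exact gridInnerBump_le_one h u

lemma innerBump_le_gridInnerBump (hh : 0 < h) {u : ℝ} (hu : u ∈ Ico 0 1) :
    innerBump u ≤ gridInnerBump h u := by
  have hmem : gridFloor h u ∈ Ico 0 1 :=
    ⟨gridFloor_nonneg hh.le u, (gridFloor_le hh hu.1).trans_lt hu.2⟩
  rw [gridInnerBump, indicator_of_mem hmem]
  exact innerBump_antitoneOn hmem hu (gridFloor_le hh hu.1)

lemma eulerDefect_eq (hh : 0 < h) :
    eulerDefect h = (∫ u in 0..1 + h, gridInnerBump h u) - ∫ u in 0..1, innerBump u := by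
  change (∫ u in Ioi 0, gridInnerBump h u) - ∫ u in 0..1, innerBump u = _
  congr 1
  rw [intervalIntegral.integral_of_le (by linarith),
    setIntegral_eq_of_subset_of_forall_sdiff_eq_zero measurableSet_Ioi Ioc_subset_Ioi_self]
  rintro u ⟨hu0, hu⟩
  have hu1 : 1 + h < u := by simpa [mem_Ioi.1 hu0] using hu
  refine indicator_of_notMem (fun hmem => ?_) _
  linarith [lt_gridFloor_add hh u, hmem.2]

lemma eulerDefect_le_two (hh : 0 < h) (h1 : h ≤ 1) : eulerDefect h ≤ 2 := by
  have hgrid : ∫ u in 0..1 + h, gridInnerBump h u ≤ ∫ _ in 0..1 + h, (1 : ℝ) :=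
    intervalIntegral.integral_mono_on (by linarith) (intervalIntegrable_gridInnerBump h _ _)
      intervalIntegrable_const fun u _ => gridInnerBump_le_one h u
  have hinner : 0 ≤ ∫ u in 0..1, innerBump u :=
    intervalIntegral.integral_nonneg zero_le_one fun _ _ => (exp_pos _).le
  rw [intervalIntegral.integral_const, smul_eq_mul, mul_one] at hgrid
  rw [eulerDefect_eq hh]
  linarith

lemma sq_div_ninety_le_integral_gridInnerBump_sub (hh : 0 < h) (h22 : h ≤ 1 / 22) :
    h ^ 2 / 90 ≤ ∫ u in 0..1, (gridInnerBump h u - innerBump u) := by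
  set m := gridFloor h (1 / 2)
  have hm_le : m ≤ 1 / 2 := gridFloor_le hh (by norm_num)
  have hm_ge : 2 / 5 ≤ m := by linarith [lt_gridFloor_add hh (1 / 2)]
  have hint : IntervalIntegrable (fun u => gridInnerBump h u - innerBump u) volume 0 1 :=
    (intervalIntegrable_gridInnerBump h 0 1).sub intervalIntegrable_innerBump
  have hsub : uIcc m (m + h / 2) ⊆ uIcc 0 1 := by
    rw [uIcc_of_le zero_le_one, uIcc_of_le (by linarith)]
    exact Icc_subset_Icc (by linarith) (by linarith)
  -- on the first half of the grid cell `[m, m + h)` the scheme still uses the value at `m`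
  have hcell : ∀ u ∈ Icc m (m + h / 2), 4 / 45 * (u - m) ≤ gridInnerBump h u - innerBump u := by
    intro u hu
    have hgrid : gridFloor h u = m := gridFloor_eq_of_mem_Ico hh ⟨hu.1, by linarith [hu.2]⟩
    have hm : m ∈ Ico (0 : ℝ) 1 := ⟨by linarith, by linarith⟩
    rw [gridInnerBump, hgrid, indicator_of_mem hm]
    have := sq_sub_sq_div_nine_le_innerBump_sub (by linarith) hu.1 (by nlinarith [hu.1, hu.2])
    nlinarith [hu.1]
  have hnonneg : 0 ≤ᵐ[volume.restrict (Ioc 0 1)] fun u => gridInnerBump h u - innerBump u := by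
    rw [← Measure.restrict_congr_set Ioo_ae_eq_Ioc]
    exact ae_restrict_of_forall_mem measurableSet_Ioo fun u hu =>
      sub_nonneg.2 (innerBump_le_gridInnerBump hh ⟨hu.1.le, hu.2⟩)
  calc h ^ 2 / 90 = ∫ u in m..m + h / 2, 4 / 45 * (u - m) := by
        rw [intervalIntegral.integral_const_mul, intervalIntegral.integral_sub
          intervalIntegral.intervalIntegrable_id intervalIntegrable_const, integral_id,
          intervalIntegral.integral_const, smul_eq_mul]
        ring
    _ ≤ ∫ u in m..m + h / 2, (gridInnerBump h u - innerBump u) :=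
        intervalIntegral.integral_mono_on (by linarith)
          ((continuous_const.mul (continuous_id.sub continuous_const)).intervalIntegrable _ _)
          (hint.mono_set hsub) hcell
    _ ≤ ∫ u in 0..1, (gridInnerBump h u - innerBump u) :=
        intervalIntegral.integral_mono_interval (by linarith) (by linarith) (by linarith)
          hnonneg hint

lemma sq_div_ninety_le_eulerDefect (hh : 0 < h) (h22 : h ≤ 1 / 22) :
    h ^ 2 / 90 ≤ eulerDefect h := by
  have hgap := sq_div_ninety_le_integral_gridInnerBump_sub hh h22
  have hext : ∫ u in 0..1, gridInnerBump h u ≤ ∫ u in 0..1 + h, gridInnerBump h u :=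
    intervalIntegral.integral_mono_interval le_rfl zero_le_one (by linarith)
      (ae_of_all _ (gridInnerBump_nonneg h)) (intervalIntegrable_gridInnerBump h _ _)
  rw [intervalIntegral.integral_sub (intervalIntegrable_gridInnerBump h 0 1)
    intervalIntegrable_innerBump] at hgap
  rw [eulerDefect_eq hh]
  linarith

end EulerDefect

lemma IsStandardBrownianMotion.map_eq_gaussianReal {Ω : Type*} [MeasurableSpace Ω]
    {P : Measure Ω} {W : ℝ → Ω → ℝ} (hW : IsStandardBrownianMotion P W) {t : ℝ} (ht : 0 ≤ t) :
    P.map (W t) = gaussianReal 0 t.toNNReal := by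
  simpa only [hW.start, sub_zero] using hW.gauss_increments 0 t le_rfl ht

lemma exp_neg_sq_div_two_div_four_le_gaussianPDFReal {v : ℝ≥0} (hv1 : 1 ≤ v) (hv2 : v ≤ 2)
    {x β : ℝ} (hx : x ^ 2 ≤ β ^ 2) : exp (-β ^ 2 / 2) / 4 ≤ gaussianPDFReal 0 v x := by
  have hv1' : (1 : ℝ) ≤ v := by exact_mod_cast hv1
  have hv2' : (v : ℝ) ≤ 2 := by exact_mod_cast hv2
  rw [gaussianPDFReal, sub_zero, div_eq_inv_mul]
  gcongr ?_ * exp ?_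
  · exact inv_anti₀ (by positivity) ((sqrt_le_left (by norm_num)).2 (by nlinarith [pi_le_four]))
  · rw [neg_div, neg_div, neg_le_neg_iff]
    calc x ^ 2 / (2 * v) ≤ x ^ 2 / 2 :=
          div_le_div_of_nonneg_left (sq_nonneg x) two_pos (by linarith)
      _ ≤ β ^ 2 / 2 := by linarith

lemma mul_exp_neg_sq_div_four_le_gaussianReal_Icc {v : ℝ≥0} (hv1 : 1 ≤ v) (hv2 : v ≤ 2)
    {γ β : ℝ} (hγ : 0 ≤ γ) (hγβ : γ ≤ β) :
    (β - γ) * (exp (-β ^ 2 / 2) / 4) ≤ (gaussianReal 0 v).real (Icc γ β) := by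
  have hv : v ≠ 0 := (zero_lt_one.trans_le hv1).ne'
  rw [measureReal_def, gaussianReal_apply_eq_integral 0 hv, ENNReal.toReal_ofReal
    (setIntegral_nonneg measurableSet_Icc fun x _ => gaussianPDFReal_nonneg 0 v x)]
  have hpdf := setIntegral_ge_of_const_le (s := Icc γ β) measurableSet_Icc measure_Icc_lt_top.ne
    (fun x hx => exp_neg_sq_div_two_div_four_le_gaussianPDFReal (β := β) hv1 hv2
      (pow_le_pow_left₀ (hγ.trans hx.1) hx.2 2)) (integrable_gaussianPDFReal 0 v).integrableOn
  rwa [Real.volume_real_Icc_of_le hγβ, smul_eq_mul] at hpdf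

lemma integral_le_one_sub_measureReal {Ω : Type*} [MeasurableSpace Ω] {μ : Measure Ω}
    [IsProbabilityMeasure μ] {f : Ω → ℝ} (hf : Integrable f μ) (hf1 : ∀ ω, f ω ≤ 1)
    {A : Set Ω} (hA : MeasurableSet A) (hfA : ∀ ω ∈ A, f ω ≤ 0) :
    ∫ ω, f ω ∂μ ≤ 1 - μ.real A := by
  have hind : Integrable (A.indicator (1 : Ω → ℝ)) μ := (integrable_const 1).indicator hA
  calc ∫ ω, f ω ∂μ ≤ ∫ ω, (1 - A.indicator (1 : Ω → ℝ) ω) ∂μ :=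
        integral_mono hf ((integrable_const 1).sub hind) fun ω => by
          by_cases hω : ω ∈ A <;> simp [hω, hf1, hfA]
    _ = 1 - μ.real A := by
        rw [integral_sub (integrable_const 1) hind, integral_indicator_one hA]
        simp

lemma cos_mul_exp_cube_nonpos {a γ β x : ℝ} (ha : 0 ≤ a) (hγ : 0 ≤ γ) (hx : x ∈ Icc γ β)
    (hγa : 5 * π / 2 ≤ a * exp (γ ^ 3)) (hβa : a * exp (β ^ 3) ≤ 7 * π / 2) :
    cos (a * exp (x ^ 3)) ≤ 0 := by
  have hx0 : 0 ≤ x := hγ.trans hx.1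
  have hlo : a * exp (γ ^ 3) ≤ a * exp (x ^ 3) := by gcongr; exact hx.1
  have hhi : a * exp (x ^ 3) ≤ a * exp (β ^ 3) := by gcongr; exact hx.2
  rw [← cos_sub_two_pi]
  exact cos_nonpos_of_pi_div_two_le_of_le (by linarith) (by linarith)

lemma mul_exp_neg_sq_div_four_le_one_sub_integral_cos {Ω : Type*} [MeasurableSpace Ω]
    {P : Measure Ω} [IsProbabilityMeasure P] {X : Ω → ℝ} (hX : Measurable X) {v : ℝ≥0}
    (hXv : P.map X = gaussianReal 0 v) (hv1 : 1 ≤ v) (hv2 : v ≤ 2) {a γ β : ℝ} (ha : 0 ≤ a)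
    (hγ : 0 ≤ γ) (hγβ : γ ≤ β) (hγa : 5 * π / 2 ≤ a * exp (γ ^ 3))
    (hβa : a * exp (β ^ 3) ≤ 7 * π / 2) :
    (β - γ) * (exp (-β ^ 2 / 2) / 4) ≤ 1 - ∫ ω, cos (a * exp (X ω ^ 3)) ∂P := by
  have hmass : (β - γ) * (exp (-β ^ 2 / 2) / 4) ≤ P.real (X ⁻¹' Icc γ β) := by
    rw [measureReal_def, ← Measure.map_apply hX measurableSet_Icc, hXv, ← measureReal_def]
    exact mul_exp_neg_sq_div_four_le_gaussianReal_Icc hv1 hv2 hγ hγβ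
  have hint : Integrable (fun ω => cos (a * exp (X ω ^ 3))) P :=
    Integrable.of_bound (by fun_prop) 1 (ae_of_all _ fun ω => by simpa using abs_cos_le_one _)
  have hcos := integral_le_one_sub_measureReal hint (fun ω => cos_le_one _)
    (hX measurableSet_Icc) fun ω hω => cos_mul_exp_cube_nonpos ha hγ hω hγa hβa
  linarith

section EulerMean

variable {Ω : Type*} [MeasurableSpace Ω] {P : Measure Ω} {W : ℝ → Ω → ℝ}

noncomputable def cosMean (P : Measure Ω) (W : ℝ → Ω → ℝ) (a τ : ℝ) : ℝ :=
  ∫ ω, cos (a * exp (W τ ω ^ 3)) ∂P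

lemma abs_cosMean_le_one [IsProbabilityMeasure P] (a τ : ℝ) : |cosMean P W a τ| ≤ 1 := by
  rw [cosMean]
  simpa using norm_integral_le_of_norm_le_const (μ := P)
    (ae_of_all _ fun ω => (norm_eq_abs _).trans_le (abs_cos_le_one (a * exp (W τ ω ^ 3))))

lemma exp_neg_sq_div_42_le_one_sub_cosMean (hW : IsStandardBrownianMotion P W) {τ a β : ℝ}
    (hτ1 : 1 ≤ τ) (hτ2 : τ ≤ 2) (ha0 : 0 < a) (ha2 : a ≤ 2) (hβ : 0 ≤ β)
    (hβ3 : β ^ 3 = log (7 * π / (2 * a))) :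
    exp (-β ^ 2) / 42 ≤ 1 - cosMean P W a τ := by
  have := hW.isProbabilityMeasure
  have hπ := pi_gt_three
  obtain ⟨γ, hγ, hγ3⟩ := exists_nonneg_pow_eq (x := log (5 * π / (2 * a)))
    (log_nonneg (by rw [le_div_iff₀ (by positivity)]; linarith)) three_ne_zero
  have hlog75 : 2 / 7 ≤ β ^ 3 - γ ^ 3 := by
    have hdiv : β ^ 3 - γ ^ 3 = log (7 / 5) := by
      rw [hβ3, hγ3, ← log_div (by positivity) (by positivity)]
      congr 1; field_simp
    have := one_sub_inv_le_log_of_pos (by norm_num : (0 : ℝ) < 7 / 5)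
    norm_num at this
    linarith
  have hγβ : γ ≤ β := le_of_pow_le_pow_left₀ three_ne_zero hβ (by linarith)
  have hwindow := mul_exp_neg_sq_div_four_le_one_sub_integral_cos (hW.measurable τ)
    (hW.map_eq_gaussianReal (by linarith))
    ((Real.le_toNNReal_iff_coe_le (by linarith)).2 (by simpa using hτ1))
    (Real.toNNReal_le_iff_le_coe.2 (by simpa using hτ2)) ha0.le hγ hγβ
    (by rw [hγ3, exp_log (by positivity)]; field_simp; rfl)
    (by rw [hβ3, exp_log (by positivity)]; field_simp; rfl)
  have hcube : 2 / 21 ≤ (β - γ) * β ^ 2 := by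
    nlinarith [mul_nonneg (mul_nonneg (sub_nonneg.2 hγβ) (sub_nonneg.2 hγβ))
      (by linarith : 0 ≤ 2 * β + γ)]
  have hsq : β ^ 2 * exp (-β ^ 2 / 2) ≤ 1 := by
    rw [neg_div, exp_neg, ← div_eq_mul_inv, div_le_one (exp_pos _)]
    exact self_le_exp_half _
  calc exp (-β ^ 2) / 42 = 2 / 21 * (exp (-β ^ 2 / 2) * exp (-β ^ 2 / 2)) / 4 := by
        rw [← exp_add]; ring_nf
    _ ≤ (β - γ) * β ^ 2 * (exp (-β ^ 2 / 2) * exp (-β ^ 2 / 2)) / 4 := by gcongr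
    _ = (β - γ) * (β ^ 2 * exp (-β ^ 2 / 2)) * exp (-β ^ 2 / 2) / 4 := by ring
    _ ≤ (β - γ) * 1 * exp (-β ^ 2 / 2) / 4 := by gcongr
    _ ≤ 1 - cosMean P W a τ := by rw [mul_one, mul_div_assoc]; exact hwindow

noncomputable def eulerIntegrand (P : Measure Ω) (W : ℝ → Ω → ℝ) (h s : ℝ) : ℝ :=
  (Ioi 1).indicator outerBump (gridFloor h s) * cosMean P W (eulerDefect h) (gridFloor h s)

lemma measurable_eulerIntegrand (h : ℝ) : Measurable (eulerIntegrand P W h) :=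
  measurable_comp_gridFloor fun τ => (Ioi 1).indicator outerBump τ * cosMean P W (eulerDefect h) τ

lemma abs_indicator_outerBump_le_one (y : ℝ) : |(Ioi 1).indicator outerBump y| ≤ 1 := by
  by_cases hy : y ∈ Ioi 1
  · rw [indicator_of_mem hy, abs_of_pos (outerBump_pos y)]
    exact outerBump_le_one (by nlinarith [mem_Ioi.1 hy])
  · simp [indicator_of_notMem hy]

lemma abs_eulerIntegrand_le_one [IsProbabilityMeasure P] (h s : ℝ) :
    |eulerIntegrand P W h s| ≤ 1 := by
  rw [eulerIntegrand, abs_mul]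
  exact mul_le_one₀ (abs_indicator_outerBump_le_one _) (abs_nonneg _) (abs_cosMean_le_one _ _)

lemma eulerIntegrand_le_outerBump [IsProbabilityMeasure P] {h s : ℝ} (hh : 0 < h) (hs : 1 < s) :
    eulerIntegrand P W h s ≤ outerBump s := by
  rw [eulerIntegrand]
  by_cases hτ : gridFloor h s ∈ Ioi 1
  · rw [indicator_of_mem hτ]
    calc outerBump (gridFloor h s) * cosMean P W (eulerDefect h) (gridFloor h s)
        ≤ outerBump (gridFloor h s) * 1 :=
          mul_le_mul_of_nonneg_left (abs_le.1 (abs_cosMean_le_one _ _)).2 (exp_pos _).le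
      _ ≤ outerBump s := by
          rw [mul_one]
          exact outerBump_monotoneOn hτ hs (gridFloor_le hh (by linarith))
  · rw [indicator_of_notMem hτ, zero_mul]
    exact (exp_pos _).le

lemma exp_neg_sq_div_126_le_outerBump_sub_eulerIntegrand (hW : IsStandardBrownianMotion P W)
    {h s β : ℝ} (hh : 0 < h) (h22 : h ≤ 1 / 22) (hs : s ∈ Icc (3 / 2) 2) (hβ : 0 ≤ β)
    (hβ3 : β ^ 3 = log (7 * π / (2 * eulerDefect h))) :
    exp (-β ^ 2) / 126 ≤ outerBump s - eulerIntegrand P W h s := by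
  set τ := gridFloor h s
  have hτs : τ ≤ s := gridFloor_le hh (by linarith [hs.1])
  have hτ : 29 / 20 ≤ τ := by linarith [lt_gridFloor_add hh s, hs.1]
  have hτ1 : τ ∈ Ioi 1 := mem_Ioi.2 (by linarith)
  have ha0 : 0 < eulerDefect h :=
    lt_of_lt_of_le (by positivity) (sq_div_ninety_le_eulerDefect hh h22)
  have hcos := exp_neg_sq_div_42_le_one_sub_cosMean hW (τ := τ) (by linarith) (by linarith [hs.2])
    ha0 (eulerDefect_le_two hh (by linarith)) hβ hβ3
  have hbump : exp (-1) ≤ outerBump τ := exp_neg_one_le_outerBump (by nlinarith)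
  have hmono : outerBump τ ≤ outerBump s :=
    outerBump_monotoneOn hτ1 (mem_Ioi.2 (by linarith [hs.1])) hτs
  have hexp : 1 / 3 ≤ exp (-1) := by
    rw [exp_neg, one_div]; exact inv_anti₀ (exp_pos 1) exp_one_lt_three.le
  rw [eulerIntegrand, indicator_of_mem hτ1]
  nlinarith [exp_pos (-β ^ 2)]

lemma exp_neg_sq_div_252_le_meanExactX1_sub_meanEulerY1 (hW : IsStandardBrownianMotion P W)
    {h t β : ℝ} (hh : 0 < h) (h22 : h ≤ 1 / 22) (ht : 2 ≤ t) (hβ : 0 ≤ β)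
    (hβ3 : β ^ 3 = log (7 * π / (2 * eulerDefect h))) :
    exp (-β ^ 2) / 252 ≤ meanExactX1 t - meanEulerY1 P W h t := by
  have := hW.isProbabilityMeasure
  have houter : ∀ a b, 1 ≤ a → a ≤ b → IntervalIntegrable outerBump volume a b := by
    intro a b ha hab
    refine intervalIntegrable_of_abs_le (C := 1) measurable_outerBump fun s hs => ?_
    rw [uIoc_of_le hab] at hs
    rw [abs_of_pos (outerBump_pos s)]
    exact outerBump_le_one (by nlinarith [hs.1])
  have heuler : ∀ a b, IntervalIntegrable (eulerIntegrand P W h) volume a b := fun a b =>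
    intervalIntegrable_of_abs_le (measurable_eulerIntegrand h) fun s _ =>
      abs_eulerIntegrand_le_one h s
  have hint : ∀ a b, 1 ≤ a → a ≤ b →
      IntervalIntegrable (fun s => outerBump s - eulerIntegrand P W h s) volume a b :=
    fun a b ha hab => (houter a b ha hab).sub (heuler a b)
  have hnonneg : 0 ≤ᵐ[volume.restrict (Ioc 1 t)] fun s => outerBump s - eulerIntegrand P W h s :=
    ae_restrict_of_forall_mem measurableSet_Ioc fun s hs =>
      sub_nonneg.2 (eulerIntegrand_le_outerBump hh hs.1)
  calc exp (-β ^ 2) / 252 = ∫ _ in (3 / 2 : ℝ)..2, exp (-β ^ 2) / 126 := by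
        rw [intervalIntegral.integral_const, smul_eq_mul]; ring
    _ ≤ ∫ s in (3 / 2 : ℝ)..2, (outerBump s - eulerIntegrand P W h s) :=
        intervalIntegral.integral_mono_on (by norm_num) intervalIntegrable_const
          (hint _ _ (by norm_num) (by norm_num)) fun s hs =>
            exp_neg_sq_div_126_le_outerBump_sub_eulerIntegrand hW hh h22 hs hβ hβ3
    _ ≤ ∫ s in (1 : ℝ)..t, (outerBump s - eulerIntegrand P W h s) :=
        intervalIntegral.integral_mono_interval (by norm_num) (by norm_num) ht hnonneg
          (hint _ _ le_rfl (by linarith))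
    _ = meanExactX1 t - meanEulerY1 P W h t :=
        intervalIntegral.integral_sub (houter 1 t le_rfl (by linarith)) (heuler 1 t)

end EulerMean

lemma log_seven_pi_div_le {h a : ℝ} (hh : 0 < h) (ha : h ^ 2 / 90 ≤ a) :
    log (7 * π / (2 * a)) ≤ 10 - 2 * log h := by
  have ha0 : 0 < a := lt_of_lt_of_le (by positivity) ha
  have hle : 7 * π / (2 * a) ≤ 315 * π / h ^ 2 := by
    rw [div_le_div_iff₀ (by positivity) (by positivity)]
    nlinarith [pi_pos]
  have hexp : 315 * π ≤ exp 10 :=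
    calc 315 * π ≤ 2 ^ 10 := by nlinarith [pi_lt_d2]
      _ ≤ exp 1 ^ 10 := by gcongr; exact exp_one_gt_two.le
      _ = exp 10 := by rw [← exp_nat_mul]; norm_num
  calc log (7 * π / (2 * a)) ≤ log (315 * π / h ^ 2) := log_le_log (by positivity) hle
    _ = log (315 * π) - 2 * log h := by
        rw [log_div (by positivity) (by positivity), log_pow]; push_cast; ring
    _ ≤ 10 - 2 * log h := by linarith [(log_le_iff_le_exp (by positivity)).2 hexp]

lemma exp_neg_mul_rpow_two_thirds_le {X β : ℝ} (hX : 2 ≤ X) (hβ : 0 ≤ β)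
    (hβX : β ^ 3 ≤ 10 + 2 * X) : exp (-14 * X ^ ((2 : ℝ) / 3)) ≤ exp (-β ^ 2) / 252 := by
  set Y := X ^ ((2 : ℝ) / 3)
  have hY3 : Y ^ 3 = X ^ 2 := by
    rw [← rpow_natCast, ← rpow_mul (by linarith)]; norm_num
  have hY1 : 1 ≤ Y := one_le_rpow (by linarith) (by norm_num)
  have hβY : β ^ 2 ≤ 4 * Y := by
    refine le_of_pow_le_pow_left₀ three_ne_zero (by positivity) ?_
    calc (β ^ 2) ^ 3 = (β ^ 3) ^ 2 := by ring
      _ ≤ (7 * X) ^ 2 := by gcongr; linarith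
      _ ≤ (4 * Y) ^ 3 := by nlinarith [hY3, sq_nonneg X]
  have hexp9 : 252 ≤ exp 9 :=
    calc (252 : ℝ) ≤ 2 ^ 9 := by norm_num
      _ ≤ exp 1 ^ 9 := by gcongr; exact exp_one_gt_two.le
      _ = exp 9 := by rw [← exp_nat_mul]; norm_num
  calc exp (-14 * Y) ≤ exp (-β ^ 2 - 9) := exp_le_exp.2 (by linarith)
    _ = exp (-β ^ 2) / exp 9 := by rw [sub_eq_add_neg, exp_add, div_eq_mul_inv, ← exp_neg]
    _ ≤ exp (-β ^ 2) / 252 := by gcongr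

lemma tendsto_exp_neg_mul_abs_log_rpow_div_rpow (c : ℝ) {α p : ℝ} (hα : 0 < α) (hp0 : 0 < p)
    (hp1 : p < 1) :
    Tendsto (fun h : ℝ => exp (-c * |log h| ^ p) / h ^ α) (𝓝[>] 0) atTop := by
  have hlog : Tendsto (fun h : ℝ => -log h) (𝓝[>] 0) atTop :=
    tendsto_neg_atBot_atTop.comp tendsto_log_nhdsGT_zero
  -- `α X - c X ^ p = X ^ p (α X ^ (1 - p) - c)` with both factors tending to infinity
  have hlin : Tendsto (fun X : ℝ => α * X - c * X ^ p) atTop atTop := by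
    refine ((tendsto_rpow_atTop hp0).atTop_mul_atTop₀ (tendsto_atTop_add_const_right _ (-c)
      ((tendsto_rpow_atTop (sub_pos.2 hp1)).const_mul_atTop hα))).congr' ?_
    filter_upwards [eventually_gt_atTop 0] with X hX
    rw [mul_add, mul_left_comm, ← rpow_add hX, add_sub_cancel, rpow_one]
    ring
  refine ((tendsto_exp_atTop.comp hlin).comp hlog).congr' ?_
  filter_upwards [Ioo_mem_nhdsGT zero_lt_one] with h hh
  rw [Function.comp_apply, Function.comp_apply, abs_of_neg (log_neg hh.1 hh.2),
    rpow_def_of_pos hh.1, ← exp_sub]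
  ring_nf

theorem euler_maruyama_converges_slower_than_any_polynomial_rate
    {Ω : Type*} [MeasurableSpace Ω] (P : Measure Ω) (W : ℝ → Ω → ℝ)
    (hW : IsStandardBrownianMotion P W) :
    (∀ h ∈ Set.Ioc (0:ℝ) (1 / 22), ∀ t ∈ Set.Ici (2:ℝ),
      Real.exp (-14 * |Real.log h| ^ ((2:ℝ)/3)) ≤ meanExactX1 t - meanEulerY1 P W h t) ∧
    (∀ α : ℝ, 0 < α → ∀ t ∈ Set.Ici (2:ℝ),
      Tendsto (fun h : ℝ => (meanExactX1 t - meanEulerY1 P W h t) / h ^ α)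
        (nhdsWithin 0 (Set.Ioi 0)) atTop) := by
  have hbound : ∀ h ∈ Ioc (0 : ℝ) (1 / 22), ∀ t ∈ Ici (2 : ℝ),
      exp (-14 * |log h| ^ ((2 : ℝ) / 3)) ≤ meanExactX1 t - meanEulerY1 P W h t := by
    rintro h ⟨hh, h22⟩ t ht
    have hlower := sq_div_ninety_le_eulerDefect hh h22
    have hupper := eulerDefect_le_two hh (by linarith)
    have hL : 0 ≤ log (7 * π / (2 * eulerDefect h)) :=
      log_nonneg (by rw [le_div_iff₀ (by linarith [pow_pos hh 2])]; linarith [pi_gt_three])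
    obtain ⟨β, hβ, hβ3⟩ := exists_nonneg_pow_eq hL three_ne_zero
    have hlog : log h ≤ -2 := (log_le_iff_le_exp hh).2 (h22.trans (by
      linarith [inv_nine_le_exp_neg_two]))
    calc exp (-14 * |log h| ^ ((2 : ℝ) / 3)) ≤ exp (-β ^ 2) / 252 :=
          exp_neg_mul_rpow_two_thirds_le (by rw [abs_of_neg (by linarith)]; linarith) hβ
            (by rw [hβ3, abs_of_neg (by linarith)]; linarith [log_seven_pi_div_le hh hlower])
      _ ≤ meanExactX1 t - meanEulerY1 P W h t :=
          exp_neg_sq_div_252_le_meanExactX1_sub_meanEulerY1 hW hh h22 ht hβ hβ3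
  refine ⟨hbound, fun α hα t ht => ?_⟩
  refine tendsto_atTop_mono' _ ?_
    (tendsto_exp_neg_mul_abs_log_rpow_div_rpow 14 (p := 2 / 3) hα (by norm_num) (by norm_num))
  filter_upwards [Ioc_mem_nhdsGT (by norm_num : (0 : ℝ) < 1 / 22)] with h hh
  exact div_le_div_of_nonneg_right (hbound h hh t ht) (rpow_pos_of_pos hh.1 α).le
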